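/- arXiv:1508.05364 — 2 statements merged into one kernel-verified Lean document; each statement's English description precedes it below -/
import Mathlib

section
/- Discrete Intermediate Value Theorem: Let D = (V,E) be a finite directed graph with no directed cycles, exactly one minimal vertex p and exactly one maximal vertex b, and let f: V → ℤ satisfy f(p) ≤ f(b) and |f(x) - f(y)| ≤ 1 for every arc (x,y) ∈ E. Then every integer r with f(p) ≤ r ≤ f(b) lies in the image of f. -/
open scoped Classical

/-- A finite multigraph: loops and parallel edges allowed. -/
structure Multigraph where
  V : Type
  E : Type
  [fintypeV : Fintype V]
  [fintypeE : Fintype E]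
  ends : E → Sym2 V

attribute [instance] Multigraph.fintypeV Multigraph.fintypeE

namespace Multigraph

variable (G : Multigraph)

/-- Vertex support of an edge set: vertices incident to some edge of `X`. -/
noncomputable def supp (X : Finset G.E) : Finset G.V :=
  Finset.univ.filter (fun v => ∃ e ∈ X, v ∈ G.ends e)

/-- `Δ` of the subgraph induced by the edge set `X`. -/
noncomputable def delta (X : Finset G.E) : ℤ := (X.card : ℤ) - (G.supp X).card

/-- `Δ(G) = |E(G)| - |V(G)|`. -/
noncomputable def deltaG : ℤ := (Fintype.card G.E : ℤ) - (Fintype.card G.V : ℤ)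

/-- Degree of `v` in the edge set `X`: loops count twice. -/
noncomputable def degIn (X : Finset G.E) (v : G.V) : ℕ :=
  ∑ e ∈ X, (if G.ends e = s(v, v) then 2 else if v ∈ G.ends e then 1 else 0)

/-- `u` and `v` are joined by an edge of `X`. -/
def adjIn (X : Finset G.E) (u v : G.V) : Prop := ∃ e ∈ X, G.ends e = s(u, v)

/-- Reachability using only edges of `X`. -/
def reachIn (X : Finset G.E) : G.V → G.V → Prop :=
  Relation.ReflTransGen (G.adjIn X)

/-- The edge set `X` induces a connected subgraph. -/
def ConnSet (X : Finset G.E) : Prop :=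
  X.Nonempty ∧ ∀ u ∈ G.supp X, ∀ v ∈ G.supp X, G.reachIn X u v

/-- Edges of the component of the subgraph `(V, X)` containing vertex `v`. -/
noncomputable def compEdges (X : Finset G.E) (v : G.V) : Finset G.E :=
  X.filter (fun f => ∃ u ∈ G.ends f, G.reachIn X v u)

/-- Vertices of the component of `v` in the graph `(V, X)` (all vertices kept). -/
noncomputable def compVerts (X : Finset G.E) (v : G.V) : Finset G.V :=
  Finset.univ.filter (fun u => G.reachIn X v u)

/-- `C` is (the edge set of) a cycle: connected, every vertex of degree 2. -/
def IsCycleSet (C : Finset G.E) : Prop :=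
  G.ConnSet C ∧ ∀ v ∈ G.supp C, G.degIn C v = 2

/-- `T` induces a tree. -/
def IsTreeSet (T : Finset G.E) : Prop := G.ConnSet T ∧ G.delta T = -1

/-- The component of `v` in `(V, X)` is a tree (possibly a single vertex). -/
def IsTreeCompAt (X : Finset G.E) (v : G.V) : Prop :=
  (G.compEdges X v).card + 1 = (G.compVerts X v).card

/-- The number of tree components of the graph `(V, X)`. -/
noncomputable def treeCount (X : Finset G.E) : ℕ :=
  (((Finset.univ : Finset G.V).filter (fun v => G.IsTreeCompAt X v)).image
    (fun v => G.compVerts X v)).card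

/-- The graph `G` has no isolated vertices. -/
def NoIso : Prop := ∀ v : G.V, ∃ e : G.E, v ∈ G.ends e

/-- The graph `G` has no leaves. -/
def NoLeaf : Prop := ∀ v : G.V, G.degIn Finset.univ v ≠ 1

/-- The graph `G` is connected. -/
def GConn : Prop := Nonempty G.V ∧ ∀ u v : G.V, G.reachIn Finset.univ u v

/-- `G` is a bicycle: connected, leafless, with `Δ(G) = 1`. -/
def IsBicycle : Prop := G.GConn ∧ G.NoLeaf ∧ G.deltaG = 1

/-- One round of deleting all edges incident to a leaf. -/
noncomputable def pruneStep (X : Finset G.E) : Finset G.E :=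
  X.filter (fun e => ∀ v ∈ G.ends e, G.degIn X v ≠ 1)

/-- Edge set obtained from `G` by repeatedly deleting leaves until none remain. -/
noncomputable def kernelSet : Finset G.E :=
  G.pruneStep^[Fintype.card G.E] Finset.univ

/-- `Δ` of the component of `G` containing `v`. -/
noncomputable def compDelta (v : G.V) : ℤ :=
  ((G.compEdges Finset.univ v).card : ℤ) - ((G.compVerts Finset.univ v).card : ℤ)

/-- The core `[G]`: union of the kernels of the components `A` with `Δ(A) ≥ 1`. -/
noncomputable def coreSet : Finset G.E :=
  G.kernelSet.filter (fun e => ∀ v ∈ G.ends e, 1 ≤ G.compDelta v)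

/-- `P` is the edge set of an `(x,y)`-path. -/
def IsPathSet (P : Finset G.E) (x y : G.V) : Prop :=
  G.ConnSet P ∧ x ≠ y ∧ x ∈ G.supp P ∧ y ∈ G.supp P ∧
  G.degIn P x = 1 ∧ G.degIn P y = 1 ∧
  ∀ v ∈ G.supp P, v ≠ x → v ≠ y → G.degIn P v = 2

/-- `C` induces a bicycle subgraph: connected, leafless, `Δ = 1`. -/
def IsBicycleSet (C : Finset G.E) : Prop :=
  G.ConnSet C ∧ (∀ v ∈ G.supp C, G.degIn C v ≠ 1) ∧ G.delta C = 1

/-- Circuits of the `k`-circular matroid `M_k(G)`: minimal nonempty edge sets `C`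
with `|C| = |V(G⟨C⟩)| + k`, i.e. `Δ(G⟨C⟩) = k`. -/
def IsCircuitSet (k : ℕ) (C : Finset G.E) : Prop :=
  (C.Nonempty ∧ G.delta C = (k : ℤ)) ∧
  ∀ D ⊂ C, ¬ (D.Nonempty ∧ G.delta D = (k : ℤ))

/-- Independent sets of `M_k(G)`. -/
def Indep (k : ℕ) (I : Finset G.E) : Prop := ∀ C ⊆ I, ¬ G.IsCircuitSet k C

/-- Bases of `M_k(G)`: maximal independent sets. -/
def IsBase (k : ℕ) (B : Finset G.E) : Prop :=
  G.Indep k B ∧ ∀ B' : Finset G.E, G.Indep k B' → B ⊆ B' → B' = B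

/-- The matroid `M_k(G)` is connected: at least two elements and every two
elements lie on a common circuit. -/
def MConn (k : ℕ) : Prop :=
  2 ≤ Fintype.card G.E ∧
  ∀ a b : G.E, ∃ C : Finset G.E, G.IsCircuitSet k C ∧ a ∈ C ∧ b ∈ C

end Multigraph

/-!
If `r` is not a value of `f`, an arc changes `f` by at most one and so cannot join
`{f < r}` to `{f > r}`. Hence `{f < r}`, which contains `p`, is closed under successors,
and by acyclicity it contains a sink. The only sink is `b`, yet `r ≤ f b`.
-/

lemma Int.lt_iff_lt_of_abs_sub_le_one {a b r : ℤ} (h : |a - b| ≤ 1) (ha : a ≠ r)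
    (hb : b ≠ r) : a < r ↔ b < r := by
  have := abs_le.mp h
  omega

lemma exists_sink_mem_of_forall_rel_mem {V : Type*} [Finite V] {E : V → V → Prop}
    (hacyc : ∀ v, ¬ Relation.TransGen E v v) {S : Set V} (hS : S.Nonempty)
    (hclosed : ∀ x y, E x y → x ∈ S → y ∈ S) : ∃ v ∈ S, ∀ x, ¬ E v x := by
  have : IsStrictOrder V (flip (Relation.TransGen E)) :=
    { irrefl := hacyc, trans := fun _ _ _ hab hbc => hbc.trans hab }
  obtain ⟨v, hv, hmin⟩ :=
    (Finite.wellFounded_of_trans_of_irrefl (flip (Relation.TransGen E))).has_min S hS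
  exact ⟨v, hv, fun x hvx => hmin x (hclosed v x hvx hv) (.single hvx)⟩

theorem stmt_4_general {V : Type} [Fintype V] (E : V → V → Prop)
    (hacyc : ∀ v, ¬ Relation.TransGen E v v)
    (p b : V)
    (hbuniq : ∀ v, (∀ x, ¬ E v x) → v = b)
    (f : V → ℤ)
    (hstep : ∀ x y, E x y → |f x - f y| ≤ 1) :
    ∀ r : ℤ, f p ≤ r → r ≤ f b → ∃ v, f v = r := by
  intro r hpr hrb
  by_contra! hmiss
  obtain ⟨v, hv, hsink⟩ := exists_sink_mem_of_forall_rel_mem (S := {v | f v < r}) hacyc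
    ⟨p, lt_of_le_of_ne hpr (hmiss p)⟩
    fun x y hxy => (Int.lt_iff_lt_of_abs_sub_le_one (hstep x y hxy) (hmiss x) (hmiss y)).mp
  have hvb : v = b := hbuniq v hsink
  subst hvb
  exact (not_lt.mpr hrb) hv

/-- Discrete Intermediate Value Theorem for acyclic digraphs with a unique
minimal vertex `p` and unique maximal vertex `b`. -/
theorem stmt_4 {V : Type} [Fintype V] [Nonempty V] (E : V → V → Prop)
    (hirr : ∀ x, ¬ E x x)
    (hacyc : ∀ v, ¬ Relation.TransGen E v v)
    (p b : V)
    (hpmin : ∀ x, ¬ E x p) (hpuniq : ∀ v, (∀ x, ¬ E x v) → v = p)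
    (hbmax : ∀ x, ¬ E b x) (hbuniq : ∀ v, (∀ x, ¬ E v x) → v = b)
    (f : V → ℤ) (hfpb : f p ≤ f b)
    (hstep : ∀ x y, E x y → |f x - f y| ≤ 1) :
    ∀ r : ℤ, f p ≤ r → r ≤ f b → ∃ v, f v = r :=
  stmt_4_general E hacyc p b hbuniq f hstep
end

section
/- A graph D is a bicycle (i.e., a connected graph with no leaves and Δ(D) = 1) if and only if D is a Θ-graph, a dumbbell, or a butterfly. -/
open scoped Classical

namespace Multigraph

variable (G : Multigraph)

/-- `G` is a `Θ`-graph: two vertices joined by three internally disjoint paths. -/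
def IsTheta : Prop :=
  G.NoIso ∧ ∃ (x y : G.V) (P₁ P₂ P₃ : Finset G.E),
    G.IsPathSet P₁ x y ∧ G.IsPathSet P₂ x y ∧ G.IsPathSet P₃ x y ∧
    P₁ ∪ P₂ ∪ P₃ = Finset.univ ∧
    Disjoint P₁ P₂ ∧ Disjoint P₁ P₃ ∧ Disjoint P₂ P₃ ∧
    G.supp P₁ ∩ G.supp P₂ = {x, y} ∧ G.supp P₁ ∩ G.supp P₃ = {x, y} ∧
    G.supp P₂ ∩ G.supp P₃ = {x, y}

/-- `G` is a butterfly: two cycles sharing exactly one vertex. -/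
def IsButterfly : Prop :=
  G.NoIso ∧ ∃ (C₁ C₂ : Finset G.E) (x : G.V),
    G.IsCycleSet C₁ ∧ G.IsCycleSet C₂ ∧ Disjoint C₁ C₂ ∧
    C₁ ∪ C₂ = Finset.univ ∧ G.supp C₁ ∩ G.supp C₂ = {x}

/-- `G` is a dumbbell: two vertex-disjoint cycles joined by a path meeting
each cycle in exactly one endpoint. -/
def IsDumbbell : Prop :=
  G.NoIso ∧ ∃ (C₁ C₂ P : Finset G.E) (x y : G.V),
    G.IsCycleSet C₁ ∧ G.IsCycleSet C₂ ∧ G.IsPathSet P x y ∧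
    Disjoint C₁ C₂ ∧ Disjoint C₁ P ∧ Disjoint C₂ P ∧
    C₁ ∪ C₂ ∪ P = Finset.univ ∧
    G.supp C₁ ∩ G.supp C₂ = ∅ ∧
    G.supp C₁ ∩ G.supp P = {x} ∧ G.supp C₂ ∩ G.supp P = {y}

end Multigraph

/-!
A Θ-graph, a dumbbell and a butterfly are unions of paths and cycles glued at one or two
vertices, so they are connected, every vertex has degree at least 2, and `Δ` adds up to `1`
(`Δ` of a path is `-1`, of a cycle `0`, and gluing along `k` vertices adds `k`).

Conversely, in a bicycle every degree is at least 2 and the handshake lemma with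
`|E| = |V| + 1` gives `∑ (deg v - 2) = 2`, so the set `S` of vertices of degree `≠ 2` is a
single vertex of degree 4 or two vertices of degree 3. Let `W` be a component of `G - S`, with
edge set `K` and `a` edges attaching it to `S`. All its vertices have degree 2, so
`2|W| = 2|K| + a`, while `|W| ≤ |K| + 1` and `a ≥ 1` by connectivity; hence `a = 2`, and `K`
with its two attachments is an ear: a cycle through one vertex of `S` or a path between two.
These ears, together with the edges inside `S`, partition `E`, and counting the degrees of the
vertices of `S` over them leaves exactly the three shapes.
-/

lemma Finset.sum_eq_card_filter_add_two_mul {ι : Type*} (F : Finset ι) {d : ι → ℕ}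
    (hd : ∀ i ∈ F, d i ≤ 2) :
    ∑ i ∈ F, d i = (F.filter (d · = 1)).card + 2 * (F.filter (d · = 2)).card := by
  rw [Finset.card_filter, Finset.card_filter, Finset.mul_sum, ← Finset.sum_add_distrib]
  refine Finset.sum_congr rfl fun i hi => ?_
  have := hd i hi
  split_ifs <;> omega

namespace Multigraph

variable {G : Multigraph}

section Degrees

variable {X Y : Finset G.E} {e : G.E} {v : G.V}

noncomputable def endCount (G : Multigraph) (e : G.E) (v : G.V) : ℕ :=
  if G.ends e = s(v, v) then 2 else if v ∈ G.ends e then 1 else 0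

lemma degIn_eq_sum_endCount (X : Finset G.E) (v : G.V) :
    G.degIn X v = ∑ e ∈ X, G.endCount e v := rfl

lemma exists_ends_eq (e : G.E) : ∃ a b, G.ends e = s(a, b) :=
  Sym2.ind (fun a b => ⟨a, b, rfl⟩) (G.ends e)

lemma endCount_eq_zero (h : v ∉ G.ends e) : G.endCount e v = 0 := by
  have hloop : G.ends e ≠ s(v, v) := fun hl => h (hl ▸ Sym2.mem_mk_left v v)
  simp [endCount, hloop, h]

lemma one_le_endCount (h : v ∈ G.ends e) : 1 ≤ G.endCount e v := by
  unfold endCount; split_ifs <;> omega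

lemma endCount_eq {a b : G.V} (h : G.ends e = s(a, b)) (v : G.V) :
    G.endCount e v = (if v = a then 1 else 0) + (if v = b then 1 else 0) := by
  rw [endCount, h]
  by_cases hva : v = a <;> by_cases hvb : v = b
  · subst hva hvb; simp
  · subst hva; simp [Ne.symm hvb, hvb]
  · subst hvb; simp [Ne.symm hva, hva]
  · simp [hva, hvb, Ne.symm hva, Ne.symm hvb]

lemma sum_endCount_of_ends_subset {T : Finset G.V} (h : ∀ u ∈ G.ends e, u ∈ T) :
    ∑ v ∈ T, G.endCount e v = 2 := by
  obtain ⟨a, b, hab⟩ := G.exists_ends_eq e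
  rw [Finset.sum_congr rfl fun v _ => endCount_eq hab v, Finset.sum_add_distrib,
    Finset.sum_ite_eq', Finset.sum_ite_eq', if_pos (h a (hab ▸ Sym2.mem_mk_left a b)),
    if_pos (h b (hab ▸ Sym2.mem_mk_right a b))]

lemma mem_supp : v ∈ G.supp X ↔ ∃ e ∈ X, v ∈ G.ends e := by
  simp [supp]

lemma supp_union : G.supp (X ∪ Y) = G.supp X ∪ G.supp Y := by
  ext v
  simp only [mem_supp, Finset.mem_union, or_and_right, exists_or]

lemma supp_mono (h : X ⊆ Y) : G.supp X ⊆ G.supp Y := fun _ hv =>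
  let ⟨e, he, hve⟩ := mem_supp.1 hv
  mem_supp.2 ⟨e, h he, hve⟩

lemma mem_supp_singleton : v ∈ G.supp {e} ↔ v ∈ G.ends e := by
  simp [mem_supp]

lemma supp_univ_of_noIso (h : G.NoIso) : G.supp Finset.univ = Finset.univ :=
  Finset.eq_univ_of_forall fun v =>
    let ⟨e, he⟩ := h v
    mem_supp.2 ⟨e, Finset.mem_univ e, he⟩

lemma degIn_eq_zero (h : v ∉ G.supp X) : G.degIn X v = 0 :=
  Finset.sum_eq_zero fun e he => endCount_eq_zero fun hv => h (mem_supp.2 ⟨e, he, hv⟩)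

lemma one_le_degIn (h : v ∈ G.supp X) : 1 ≤ G.degIn X v := by
  obtain ⟨e, he, hv⟩ := mem_supp.1 h
  exact (one_le_endCount hv).trans
    (Finset.single_le_sum (f := (G.endCount · v)) (fun _ _ => Nat.zero_le _) he)

lemma degIn_pos_iff : 0 < G.degIn X v ↔ v ∈ G.supp X :=
  ⟨fun h => by_contra fun hv => h.ne' (degIn_eq_zero hv), one_le_degIn⟩

lemma degIn_union (h : Disjoint X Y) (v : G.V) :
    G.degIn (X ∪ Y) v = G.degIn X v + G.degIn Y v :=
  Finset.sum_union h

lemma degIn_add_degIn_compl (X : Finset G.E) (v : G.V) :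
    G.degIn X v + G.degIn Xᶜ v = G.degIn Finset.univ v := by
  rw [← degIn_union disjoint_compl_right, Finset.union_compl]

lemma degIn_mono (h : X ⊆ Y) (v : G.V) : G.degIn X v ≤ G.degIn Y v :=
  Finset.sum_le_sum_of_subset h

lemma handshake (X : Finset G.E) : ∑ v ∈ G.supp X, G.degIn X v = 2 * X.card := by
  simp only [degIn_eq_sum_endCount]
  rw [Finset.sum_comm, Finset.sum_congr rfl fun e he =>
    sum_endCount_of_ends_subset fun u hu => mem_supp.2 ⟨e, he, hu⟩]
  simp [mul_comm]

end Degrees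

section Reachability

variable {X Y : Finset G.E} {e : G.E} {u v : G.V}

lemma adjIn.symm (h : G.adjIn X u v) : G.adjIn X v u :=
  let ⟨e, he, hends⟩ := h
  ⟨e, he, hends.trans Sym2.eq_swap⟩

lemma adjIn_of_mem_ends (he : e ∈ X) (hu : u ∈ G.ends e) (hv : v ∈ G.ends e) (huv : u ≠ v) :
    G.adjIn X u v :=
  ⟨e, he, ((Sym2.mem_and_mem_iff huv).1 ⟨hu, hv⟩)⟩

lemma reachIn.symm (h : G.reachIn X u v) : G.reachIn X v u :=
  Relation.ReflTransGen.mono (fun _ _ => adjIn.symm) _ _ (Relation.ReflTransGen.swap _ _ h)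

lemma reachIn.mono (hXY : X ⊆ Y) (h : G.reachIn X u v) : G.reachIn Y u v :=
  Relation.ReflTransGen.mono (fun _ _ ⟨e, he, hends⟩ => ⟨e, hXY he, hends⟩) _ _ h

lemma reachIn_of_mem_ends (he : e ∈ X) (hu : u ∈ G.ends e) (hv : v ∈ G.ends e) :
    G.reachIn X u v := by
  by_cases huv : u = v
  · exact huv ▸ Relation.ReflTransGen.refl
  · exact Relation.ReflTransGen.single (adjIn_of_mem_ends he hu hv huv)

lemma eq_or_mem_supp_of_reachIn (h : G.reachIn X v u) : u = v ∨ u ∈ G.supp X := by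
  rcases h.cases_tail with rfl | ⟨w, -, e, he, hends⟩
  · exact Or.inl rfl
  · exact Or.inr (mem_supp.2 ⟨e, he, hends ▸ Sym2.mem_mk_right w u⟩)

lemma ConnSet.union (hX : G.ConnSet X) (hY : G.ConnSet Y) (hvX : v ∈ G.supp X)
    (hvY : v ∈ G.supp Y) : G.ConnSet (X ∪ Y) := by
  have reach_v : ∀ u ∈ G.supp (X ∪ Y), G.reachIn (X ∪ Y) u v := by
    intro u hu
    rcases Finset.mem_union.1 (supp_union ▸ hu) with hu | hu
    · exact (hX.2 u hu v hvX).mono Finset.subset_union_left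
    · exact (hY.2 u hu v hvY).mono Finset.subset_union_right
  exact ⟨hX.1.mono Finset.subset_union_left,
    fun u hu w hw => (reach_v u hu).trans (reach_v w hw).symm⟩

lemma gConn_of_connSet_univ (hiso : G.NoIso) (h : G.ConnSet Finset.univ) : G.GConn := by
  obtain ⟨e, -⟩ := h.1
  obtain ⟨a, b, -⟩ := G.exists_ends_eq e
  have hsupp := supp_univ_of_noIso hiso
  exact ⟨⟨a⟩, fun u v => h.2 u (hsupp ▸ Finset.mem_univ u) v (hsupp ▸ Finset.mem_univ v)⟩

lemma GConn.noIso [Nonempty G.E] (h : G.GConn) : G.NoIso := by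
  intro v
  obtain ⟨e⟩ := ‹Nonempty G.E›
  obtain ⟨a, b, hab⟩ := G.exists_ends_eq e
  rcases (h.2 v a).cases_head with rfl | ⟨c, ⟨f, -, hf⟩, -⟩
  · exact ⟨e, hab ▸ Sym2.mem_mk_left v b⟩
  · exact ⟨f, hf ▸ Sym2.mem_mk_left v c⟩

lemma mem_compVerts : u ∈ G.compVerts X v ↔ G.reachIn X v u := by
  simp [compVerts]

lemma mem_compEdges : e ∈ G.compEdges X v ↔ e ∈ X ∧ ∃ u ∈ G.ends e, G.reachIn X v u := by
  simp [compEdges]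

lemma self_mem_compVerts : v ∈ G.compVerts X v :=
  mem_compVerts.2 Relation.ReflTransGen.refl

lemma compVerts_eq_of_mem (h : u ∈ G.compVerts X v) : G.compVerts X u = G.compVerts X v := by
  ext w
  simp only [mem_compVerts] at h ⊢
  exact ⟨fun huw => h.trans huw, fun hvw => h.symm.trans hvw⟩

lemma compEdges_eq_of_mem (h : u ∈ G.compVerts X v) : G.compEdges X u = G.compEdges X v := by
  ext f
  simp only [compEdges, Finset.mem_filter, ← mem_compVerts, compVerts_eq_of_mem h]

lemma compEdges_subset : G.compEdges X v ⊆ X := Finset.filter_subset _ _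

lemma mem_compVerts_of_mem_ends (he : e ∈ G.compEdges X v) (hu : u ∈ G.ends e) :
    u ∈ G.compVerts X v := by
  obtain ⟨heX, w, hw, hvw⟩ := mem_compEdges.1 he
  exact mem_compVerts.2 (hvw.trans (reachIn_of_mem_ends heX hw hu))

lemma supp_compEdges_subset : G.supp (G.compEdges X v) ⊆ G.compVerts X v := fun _ hu =>
  let ⟨_, he, hue⟩ := mem_supp.1 hu
  mem_compVerts_of_mem_ends he hue

lemma degIn_compEdges (h : u ∈ G.compVerts X v) :
    G.degIn (G.compEdges X v) u = G.degIn X u :=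
  Finset.sum_subset compEdges_subset fun _ he hne =>
    endCount_eq_zero fun hu => hne (mem_compEdges.2 ⟨he, u, hu, mem_compVerts.1 h⟩)

lemma reachIn_compEdges (h : G.reachIn X v u) : G.reachIn (G.compEdges X v) v u := by
  induction h with
  | refl => exact Relation.ReflTransGen.refl
  | @tail b c hvb hbc ih =>
    obtain ⟨e, he, hends⟩ := hbc
    exact ih.tail ⟨e, mem_compEdges.2 ⟨he, b, hends ▸ Sym2.mem_mk_left b c, hvb⟩, hends⟩

noncomputable def compGraph (X : Finset G.E) (v : G.V) : SimpleGraph (G.compVerts X v) :=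
  SimpleGraph.fromRel fun a b => G.adjIn X a b

lemma compGraph_connected (X : Finset G.E) (v : G.V) : (G.compGraph X v).Connected := by
  have reach : ∀ u (h : G.reachIn X v u),
      (G.compGraph X v).Reachable ⟨v, self_mem_compVerts⟩ ⟨u, mem_compVerts.2 h⟩ := by
    intro u h
    induction h with
    | refl => rfl
    | @tail b c hvb hbc ih =>
      refine ih.trans ?_
      by_cases hbc' : b = c
      · subst hbc'; rfl
      · exact SimpleGraph.Adj.reachable ⟨fun h => hbc' (congrArg Subtype.val h), Or.inl hbc⟩
  have : Nonempty (G.compVerts X v) := ⟨⟨v, self_mem_compVerts⟩⟩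
  refine SimpleGraph.Connected.mk fun a b => ?_
  exact (reach a (mem_compVerts.1 a.2)).symm.trans (reach b (mem_compVerts.1 b.2))

lemma card_edgeSet_compGraph_le :
    Nat.card (G.compGraph X v).edgeSet ≤ (G.compEdges X v).card := by
  have hmaps : ∀ z ∈ (G.compGraph X v).edgeSet,
      Sym2.map Subtype.val z ∈ (G.compEdges X v).image G.ends := by
    refine Sym2.ind fun a b hab => ?_
    obtain ⟨-, hadj | hadj⟩ := hab
    · obtain ⟨e, he, hends⟩ := hadj
      exact Finset.mem_image.2 ⟨e, mem_compEdges.2 ⟨he, a, hends ▸ Sym2.mem_mk_left _ _,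
        mem_compVerts.1 a.2⟩, hends⟩
    · obtain ⟨e, he, hends⟩ := hadj
      exact Finset.mem_image.2 ⟨e, mem_compEdges.2 ⟨he, b, hends ▸ Sym2.mem_mk_left _ _,
        mem_compVerts.1 b.2⟩, hends.trans Sym2.eq_swap⟩
  calc Nat.card (G.compGraph X v).edgeSet
      ≤ Nat.card ((G.compEdges X v).image G.ends) :=
        Nat.card_le_card_of_injective (fun z => ⟨Sym2.map Subtype.val z.1, hmaps z.1 z.2⟩)
          fun z z' h => Subtype.ext (Sym2.map.injective Subtype.val_injective
            (congrArg Subtype.val h))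
    _ = ((G.compEdges X v).image G.ends).card := Nat.card_eq_finsetCard _
    _ ≤ (G.compEdges X v).card := Finset.card_image_le

lemma card_compVerts_le (X : Finset G.E) (v : G.V) :
    (G.compVerts X v).card ≤ (G.compEdges X v).card + 1 := by
  have := (compGraph_connected X v).card_vert_le_card_edgeSet_add_one
  rw [Nat.card_eq_finsetCard] at this
  linarith [card_edgeSet_compGraph_le (X := X) (v := v)]

lemma sum_degIn_compVerts (X : Finset G.E) (v : G.V) :
    ∑ u ∈ G.compVerts X v, G.degIn X u = 2 * (G.compEdges X v).card := by
  rw [← handshake, Finset.sum_congr rfl fun u hu => (degIn_compEdges hu).symm]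
  exact (Finset.sum_subset supp_compEdges_subset fun u _ hu => degIn_eq_zero hu).symm

end Reachability

section PathsAndCycles

variable {X Y P C : Finset G.E} {v x y : G.V}

lemma IsPathSet.symm (h : G.IsPathSet P x y) : G.IsPathSet P y x :=
  let ⟨hc, hxy, hx, hy, hdx, hdy, hint⟩ := h
  ⟨hc, hxy.symm, hy, hx, hdy, hdx, fun v hv hvy hvx => hint v hv hvx hvy⟩

lemma IsPathSet.two_le_degIn (h : G.IsPathSet P x y) (hv : v ∈ G.supp P) (hvx : v ≠ x)
    (hvy : v ≠ y) : 2 ≤ G.degIn Finset.univ v :=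
  h.2.2.2.2.2.2 v hv hvx hvy ▸ degIn_mono (Finset.subset_univ P) v

lemma IsCycleSet.two_le_degIn (h : G.IsCycleSet C) (hv : v ∈ G.supp C) :
    2 ≤ G.degIn Finset.univ v :=
  h.2 v hv ▸ degIn_mono (Finset.subset_univ C) v

lemma IsPathSet.card_supp (h : G.IsPathSet P x y) : (G.supp P).card = P.card + 1 := by
  obtain ⟨-, hxy, hx, hy, hdx, hdy, hint⟩ := h
  have hdeg : ∀ v ∈ G.supp P,
      G.degIn P v + (if v = x then 1 else 0) + (if v = y then 1 else 0) = 2 := by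
    intro v hv
    by_cases hvx : v = x
    · subst hvx; simp [hdx, hxy]
    by_cases hvy : v = y
    · subst hvy; simp [hdy, hvx]
    simp [hint v hv hvx hvy, hvx, hvy]
  have hsum := Finset.sum_congr rfl hdeg
  rw [Finset.sum_add_distrib, Finset.sum_add_distrib, handshake, Finset.sum_ite_eq',
    Finset.sum_ite_eq', if_pos hx, if_pos hy, Finset.sum_const, smul_eq_mul] at hsum
  omega

lemma IsCycleSet.card_supp (h : G.IsCycleSet C) : (G.supp C).card = C.card := by
  have hsum := G.handshake C
  rw [Finset.sum_congr rfl h.2, Finset.sum_const, smul_eq_mul] at hsum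
  omega

lemma IsPathSet.delta (h : G.IsPathSet P x y) : G.delta P = -1 := by
  simp only [Multigraph.delta, h.card_supp]
  push_cast
  ring

lemma IsCycleSet.delta (h : G.IsCycleSet C) : G.delta C = 0 := by
  simp only [Multigraph.delta, h.card_supp, sub_self]

lemma delta_union (h : Disjoint X Y) :
    G.delta (X ∪ Y) = G.delta X + G.delta Y + (G.supp X ∩ G.supp Y).card := by
  have hV := Finset.card_union_add_card_inter (G.supp X) (G.supp Y)
  simp only [Multigraph.delta, supp_union, Finset.card_union_of_disjoint h]
  push_cast
  omega

lemma deltaG_eq_delta_univ (hiso : G.NoIso) : G.deltaG = G.delta Finset.univ := by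
  simp [deltaG, Multigraph.delta, supp_univ_of_noIso hiso]

lemma two_le_degIn_univ (h : Disjoint X Y) (hX : v ∈ G.supp X) (hY : v ∈ G.supp Y) :
    2 ≤ G.degIn Finset.univ v := by
  have := one_le_degIn hX
  have := one_le_degIn hY
  have := degIn_mono (Finset.subset_univ (X ∪ Y)) v
  rw [degIn_union h] at this
  omega

lemma mem_supp_of_noIso (hiso : G.NoIso) (huniv : X = Finset.univ) (v : G.V) :
    v ∈ G.supp X := by
  rw [huniv, supp_univ_of_noIso hiso]
  exact Finset.mem_univ v

lemma IsTheta.isBicycle (h : G.IsTheta) : G.IsBicycle := by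
  obtain ⟨hiso, x, y, P₁, P₂, P₃, h₁, h₂, h₃, huniv, d₁₂, d₁₃, d₂₃, s₁₂, s₁₃, s₂₃⟩ := h
  have d : Disjoint (P₁ ∪ P₂) P₃ := Finset.disjoint_union_left.2 ⟨d₁₃, d₂₃⟩
  have s : G.supp (P₁ ∪ P₂) ∩ G.supp P₃ = {x, y} := by
    rw [supp_union, Finset.union_inter_distrib_right, s₁₃, s₂₃, Finset.union_self]
  have hx := h₁.2.2.1
  refine ⟨gConn_of_connSet_univ hiso (huniv ▸ (h₁.1.union h₂.1 hx h₂.2.2.1).union h₃.1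
    (supp_mono Finset.subset_union_left hx) h₃.2.2.1), fun v => ?_, ?_⟩
  · suffices 2 ≤ G.degIn Finset.univ v by omega
    by_cases hvx : v = x
    · exact hvx ▸ two_le_degIn_univ d₁₂ hx h₂.2.2.1
    by_cases hvy : v = y
    · exact hvy ▸ two_le_degIn_univ d₁₂ h₁.2.2.2.1 h₂.2.2.2.1
    have hv := mem_supp_of_noIso hiso huniv v
    simp only [supp_union, Finset.mem_union] at hv
    rcases hv with (hv | hv) | hv
    · exact h₁.two_le_degIn hv hvx hvy
    · exact h₂.two_le_degIn hv hvx hvy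
    · exact h₃.two_le_degIn hv hvx hvy
  · rw [deltaG_eq_delta_univ hiso, ← huniv, delta_union d, delta_union d₁₂, s₁₂, s,
      h₁.delta, h₂.delta, h₃.delta, Finset.card_pair h₁.2.1]
    norm_num

lemma IsButterfly.isBicycle (h : G.IsButterfly) : G.IsBicycle := by
  obtain ⟨hiso, C₁, C₂, x, h₁, h₂, d, huniv, s⟩ := h
  have hx : x ∈ G.supp C₁ ∩ G.supp C₂ := s ▸ Finset.mem_singleton_self x
  rw [Finset.mem_inter] at hx
  refine ⟨gConn_of_connSet_univ hiso (huniv ▸ h₁.1.union h₂.1 hx.1 hx.2), fun v => ?_, ?_⟩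
  · suffices 2 ≤ G.degIn Finset.univ v by omega
    have hv := mem_supp_of_noIso hiso huniv v
    rw [supp_union, Finset.mem_union] at hv
    rcases hv with hv | hv
    · exact h₁.two_le_degIn hv
    · exact h₂.two_le_degIn hv
  · rw [deltaG_eq_delta_univ hiso, ← huniv, delta_union d, s, h₁.delta, h₂.delta,
      Finset.card_singleton]
    norm_num

lemma IsDumbbell.isBicycle (h : G.IsDumbbell) : G.IsBicycle := by
  obtain ⟨hiso, C₁, C₂, P, x, y, h₁, h₂, hP, d₁₂, d₁P, d₂P, huniv, s₁₂, s₁P, s₂P⟩ := h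
  rw [Finset.union_right_comm] at huniv
  have d : Disjoint (C₁ ∪ P) C₂ := Finset.disjoint_union_left.2 ⟨d₁₂, d₂P.symm⟩
  have s : G.supp (C₁ ∪ P) ∩ G.supp C₂ = {y} := by
    rw [supp_union, Finset.union_inter_distrib_right, s₁₂, Finset.inter_comm, s₂P,
      Finset.empty_union]
  have hx : x ∈ G.supp C₁ ∩ G.supp P := s₁P ▸ Finset.mem_singleton_self x
  have hy : y ∈ G.supp C₂ ∩ G.supp P := s₂P ▸ Finset.mem_singleton_self y
  rw [Finset.mem_inter] at hx hy
  refine ⟨gConn_of_connSet_univ hiso (huniv ▸ (h₁.1.union hP.1 hx.1 hx.2).union h₂.1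
    (supp_mono Finset.subset_union_right hy.2) hy.1), fun v => ?_, ?_⟩
  · suffices 2 ≤ G.degIn Finset.univ v by omega
    by_cases hvx : v = x
    · exact hvx ▸ two_le_degIn_univ d₁P hx.1 hx.2
    by_cases hvy : v = y
    · exact hvy ▸ two_le_degIn_univ d₂P hy.1 hy.2
    have hv := mem_supp_of_noIso hiso huniv v
    simp only [supp_union, Finset.mem_union] at hv
    rcases hv with (hv | hv) | hv
    · exact h₁.two_le_degIn hv
    · exact hP.two_le_degIn hv hvx hvy
    · exact h₂.two_le_degIn hv
  · rw [deltaG_eq_delta_univ hiso, ← huniv, delta_union d, delta_union d₁P, s₁P, s,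
      h₁.delta, h₂.delta, hP.delta, Finset.card_singleton, Finset.card_singleton]
    norm_num

end PathsAndCycles

section Pieces

noncomputable def edgesAvoiding (G : Multigraph) (S : Finset G.V) : Finset G.E :=
  Finset.univ.filter fun e => ∀ u ∈ G.ends e, u ∉ S

noncomputable def attachments (G : Multigraph) (S W : Finset G.V) : Finset G.E :=
  Finset.univ.filter fun e => (∃ u ∈ G.ends e, u ∈ S) ∧ ∃ u ∈ G.ends e, u ∈ W

/-- For `v ∉ S`: the component of `G - S` containing `v`, with the edges attaching it to `S`. -/
noncomputable def pieceAt (G : Multigraph) (S : Finset G.V) (v : G.V) : Finset G.E :=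
  G.compEdges (G.edgesAvoiding S) v ∪
    G.attachments S (G.compVerts (G.edgesAvoiding S) v)

/-- The piece containing `e`; an edge with all its ends in `S` is a piece by itself. -/
noncomputable def pieceOf (G : Multigraph) (S : Finset G.V) (e : G.E) : Finset G.E :=
  if h : ∃ u ∈ G.ends e, u ∉ S then G.pieceAt S h.choose else {e}

noncomputable def pieces (G : Multigraph) (S : Finset G.V) : Finset (Finset G.E) :=
  Finset.univ.image (G.pieceOf S)

variable {S W : Finset G.V} {e g : G.E} {u v w : G.V}

lemma mem_edgesAvoiding : e ∈ G.edgesAvoiding S ↔ ∀ u ∈ G.ends e, u ∉ S := by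
  simp [edgesAvoiding]

lemma not_mem_edgesAvoiding : e ∉ G.edgesAvoiding S ↔ ∃ u ∈ G.ends e, u ∈ S := by
  simp [mem_edgesAvoiding]

lemma mem_attachments :
    e ∈ G.attachments S W ↔ (∃ u ∈ G.ends e, u ∈ S) ∧ ∃ u ∈ G.ends e, u ∈ W := by
  simp [attachments]

lemma attachments_subset_compl : G.attachments S W ⊆ (G.edgesAvoiding S)ᶜ := fun _ he =>
  let ⟨⟨s, hs, hsS⟩, _⟩ := mem_attachments.1 he
  Finset.mem_compl.2 fun h => mem_edgesAvoiding.1 h s hs hsS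

lemma not_mem_of_mem_compVerts (hv : v ∉ S)
    (hu : u ∈ G.compVerts (G.edgesAvoiding S) v) : u ∉ S := by
  rcases eq_or_mem_supp_of_reachIn (mem_compVerts.1 hu) with rfl | hu
  · exact hv
  · obtain ⟨e, he, hue⟩ := mem_supp.1 hu
    exact mem_edgesAvoiding.1 he u hue

lemma eq_of_mem_attachments (he : e ∈ G.attachments S W) (hu : u ∈ G.ends e) (huS : u ∉ S)
    (hw : w ∈ G.ends e) (hwS : w ∉ S) : u = w := by
  by_contra huw
  obtain ⟨⟨s, hs, hsS⟩, -⟩ := mem_attachments.1 he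
  rw [(Sym2.mem_and_mem_iff huw).1 ⟨hu, hw⟩, Sym2.mem_iff] at hs
  rcases hs with rfl | rfl <;> contradiction

lemma mem_compVerts_of_mem_supp_pieceAt (hv : v ∉ S) (hu : u ∈ G.supp (G.pieceAt S v))
    (huS : u ∉ S) : u ∈ G.compVerts (G.edgesAvoiding S) v := by
  obtain ⟨g, hg, hug⟩ := mem_supp.1 hu
  rcases Finset.mem_union.1 hg with hg | hg
  · exact mem_compVerts_of_mem_ends hg hug
  · obtain ⟨-, w, hwg, hw⟩ := mem_attachments.1 hg
    rwa [eq_of_mem_attachments hg hug huS hwg (not_mem_of_mem_compVerts hv hw)]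

lemma exists_mem_ends_not_mem_of_mem_pieceAt (hv : v ∉ S) (hg : g ∈ G.pieceAt S v) :
    ∃ u ∈ G.ends g, u ∉ S := by
  rcases Finset.mem_union.1 hg with hg | hg
  · obtain ⟨a, b, hab⟩ := G.exists_ends_eq g
    exact ⟨a, hab ▸ Sym2.mem_mk_left a b,
      mem_edgesAvoiding.1 (compEdges_subset hg) a (hab ▸ Sym2.mem_mk_left a b)⟩
  · obtain ⟨-, w, hwg, hw⟩ := mem_attachments.1 hg
    exact ⟨w, hwg, not_mem_of_mem_compVerts hv hw⟩

lemma pieceAt_eq_of_mem (hu : u ∈ G.compVerts (G.edgesAvoiding S) v) :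
    G.pieceAt S u = G.pieceAt S v := by
  rw [pieceAt, pieceAt, compVerts_eq_of_mem hu, compEdges_eq_of_mem hu]

lemma pieceOf_eq_pieceAt (hu : u ∈ G.ends e) (huS : u ∉ S) :
    G.pieceOf S e = G.pieceAt S u := by
  have h : ∃ u ∈ G.ends e, u ∉ S := ⟨u, hu, huS⟩
  obtain ⟨hc, hcS⟩ := h.choose_spec
  rw [pieceOf, dif_pos h]
  refine (pieceAt_eq_of_mem (mem_compVerts.2 ?_)).symm
  by_cases hcu : h.choose = u
  · exact hcu ▸ Relation.ReflTransGen.refl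
  · have hends := (Sym2.mem_and_mem_iff hcu).1 ⟨hc, hu⟩
    refine reachIn_of_mem_ends (mem_edgesAvoiding.2 fun w hw => ?_) hc hu
    rw [hends, Sym2.mem_iff] at hw
    rcases hw with rfl | rfl <;> assumption

lemma mem_pieceOf_self : e ∈ G.pieceOf S e := by
  by_cases h : ∃ u ∈ G.ends e, u ∉ S
  · obtain ⟨u, hu, huS⟩ := h
    rw [pieceOf_eq_pieceAt hu huS, pieceAt]
    by_cases he : e ∈ G.edgesAvoiding S
    · exact Finset.mem_union_left _ (mem_compEdges.2 ⟨he, u, hu, Relation.ReflTransGen.refl⟩)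
    · exact Finset.mem_union_right _ (mem_attachments.2
        ⟨not_mem_edgesAvoiding.1 he, u, hu, self_mem_compVerts⟩)
  · rw [pieceOf, dif_neg h]
    exact Finset.mem_singleton_self e

lemma pieceOf_eq_of_mem_supp (huS : u ∉ S) (hu : u ∈ G.supp (G.pieceOf S e)) :
    G.pieceOf S e = G.pieceAt S u := by
  by_cases h : ∃ u ∈ G.ends e, u ∉ S
  · rw [pieceOf, dif_pos h] at hu ⊢
    exact (pieceAt_eq_of_mem
      (mem_compVerts_of_mem_supp_pieceAt h.choose_spec.2 hu huS)).symm
  · rw [pieceOf, dif_neg h, mem_supp_singleton] at hu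
    exact absurd ⟨u, hu, huS⟩ h

lemma pieceOf_eq_of_mem (hg : g ∈ G.pieceOf S e) : G.pieceOf S g = G.pieceOf S e := by
  by_cases h : ∃ u ∈ G.ends e, u ∉ S
  · have hg' := hg
    rw [pieceOf, dif_pos h] at hg'
    obtain ⟨u, hu, huS⟩ := exists_mem_ends_not_mem_of_mem_pieceAt h.choose_spec.2 hg'
    rw [pieceOf_eq_pieceAt hu huS, pieceOf_eq_of_mem_supp huS (mem_supp.2 ⟨g, hg, hu⟩)]
  · rw [pieceOf, dif_neg h, Finset.mem_singleton] at hg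
    rw [hg]

lemma pieces_pairwise {Q Q' : Finset G.E} (hQ : Q ∈ G.pieces S) (hQ' : Q' ∈ G.pieces S)
    (hne : Q ≠ Q') : Disjoint Q Q' ∧ G.supp Q ∩ G.supp Q' ⊆ S := by
  obtain ⟨e, -, rfl⟩ := Finset.mem_image.1 hQ
  obtain ⟨e', -, rfl⟩ := Finset.mem_image.1 hQ'
  refine ⟨Finset.disjoint_left.2 fun g hg hg' => hne ?_, fun u hu => by_contra fun huS => hne ?_⟩
  · rw [← pieceOf_eq_of_mem hg, pieceOf_eq_of_mem hg']
  · rw [Finset.mem_inter] at hu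
    rw [pieceOf_eq_of_mem_supp huS hu.1, pieceOf_eq_of_mem_supp huS hu.2]

lemma biUnion_pieces : (G.pieces S).biUnion id = Finset.univ :=
  Finset.eq_univ_of_forall fun e =>
    Finset.mem_biUnion.2 ⟨G.pieceOf S e, Finset.mem_image_of_mem _ (Finset.mem_univ e),
      mem_pieceOf_self⟩

lemma biUnion_eq_univ_of_pieces_subset {T : Finset (Finset G.E)} (hF : G.pieces S ⊆ T) :
    T.biUnion id = Finset.univ :=
  Finset.eq_univ_of_forall fun e => Finset.biUnion_subset_biUnion_of_subset_left id hF
    (by rw [biUnion_pieces]; exact Finset.mem_univ e)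

lemma degIn_univ_eq_sum_pieces (v : G.V) :
    G.degIn Finset.univ v = ∑ Q ∈ G.pieces S, G.degIn Q v := by
  rw [degIn_eq_sum_endCount, ← biUnion_pieces, Finset.sum_biUnion]
  · rfl
  · exact fun Q hQ Q' hQ' hne => (pieces_pairwise hQ hQ' hne).1

end Pieces

section Ears

def IsEar (G : Multigraph) (Q : Finset G.E) (s t : G.V) : Prop :=
  (s = t ∧ G.IsCycleSet Q ∧ s ∈ G.supp Q) ∨ G.IsPathSet Q s t

/-- `Q` is an ear with both ends in `S` and no other vertex in `S`. -/
def IsEarOn (G : Multigraph) (S : Finset G.V) (Q : Finset G.E) : Prop :=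
  ∃ s ∈ S, ∃ t ∈ S, G.IsEar Q s t ∧
    ∀ r ∈ S, G.degIn Q r = (if r = s then 1 else 0) + (if r = t then 1 else 0)

variable {S W : Finset G.V} {Q : Finset G.E} {e g : G.E} {r s t u v : G.V}

lemma IsEar.isCycleSet (h : G.IsEar Q s s) : G.IsCycleSet Q :=
  h.elim (fun h => h.2.1) fun h => absurd rfl h.2.1

lemma IsEar.isPathSet (h : G.IsEar Q s t) (hst : s ≠ t) : G.IsPathSet Q s t :=
  h.resolve_left fun h => hst h.1

lemma isEar_of_degIn (hQ : G.ConnSet Q)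
    (hend : ∀ r, r = s ∨ r = t →
      G.degIn Q r = (if r = s then 1 else 0) + (if r = t then 1 else 0))
    (hint : ∀ u ∈ G.supp Q, u ≠ s → u ≠ t → G.degIn Q u = 2) : G.IsEar Q s t := by
  have hs := hend s (Or.inl rfl)
  have ht := hend t (Or.inr rfl)
  have hsQ : s ∈ G.supp Q := degIn_pos_iff.1 (by rw [hs]; simp)
  by_cases hst : s = t
  · subst hst
    refine Or.inl ⟨rfl, ⟨hQ, fun u hu => ?_⟩, hsQ⟩
    by_cases hus : u = s
    · rw [hus, hs]; simp
    · exact hint u hu hus hus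
  · refine Or.inr ⟨hQ, hst, hsQ, degIn_pos_iff.1 (by rw [ht]; simp), ?_, ?_, hint⟩
    · rw [hs]; simp [hst]
    · rw [ht]; simp [Ne.symm hst]

lemma isEarOn_singleton (h : ∀ u ∈ G.ends e, u ∈ S) : G.IsEarOn S {e} := by
  obtain ⟨a, b, hab⟩ := G.exists_ends_eq e
  have hdeg : ∀ r, G.degIn {e} r = (if r = a then 1 else 0) + (if r = b then 1 else 0) :=
    fun r => by rw [degIn_eq_sum_endCount, Finset.sum_singleton, endCount_eq hab]
  refine ⟨a, h a (hab ▸ Sym2.mem_mk_left a b), b, h b (hab ▸ Sym2.mem_mk_right a b),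
    isEar_of_degIn ⟨Finset.singleton_nonempty e, fun u hu w hw => ?_⟩ (fun r _ => hdeg r)
      fun u hu hua hub => ?_, fun r _ => hdeg r⟩
  · exact reachIn_of_mem_ends (Finset.mem_singleton_self e) (mem_supp_singleton.1 hu)
      (mem_supp_singleton.1 hw)
  · rw [mem_supp_singleton, hab, Sym2.mem_iff] at hu
    tauto

lemma sum_degIn_compl_edgesAvoiding (hW : ∀ u ∈ W, u ∉ S) :
    ∑ u ∈ W, G.degIn (G.edgesAvoiding S)ᶜ u = (G.attachments S W).card := by
  have hcount : ∀ e ∈ (G.edgesAvoiding S)ᶜ,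
      ∑ u ∈ W, G.endCount e u = if ∃ u ∈ G.ends e, u ∈ W then 1 else 0 := by
    intro e he
    obtain ⟨s, hs, hsS⟩ := not_mem_edgesAvoiding.1 (Finset.mem_compl.1 he)
    obtain ⟨w, hends⟩ : ∃ w, G.ends e = s(s, w) := ⟨_, (Sym2.other_spec hs).symm⟩
    have hsW : s ∉ W := fun h => hW s h hsS
    rw [Finset.sum_congr rfl fun u _ => endCount_eq hends u, Finset.sum_add_distrib,
      Finset.sum_ite_eq', Finset.sum_ite_eq', if_neg hsW, zero_add]
    refine if_congr ⟨fun h => ⟨w, hends ▸ Sym2.mem_mk_right s w, h⟩, ?_⟩ rfl rfl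
    rintro ⟨u, hu, huW⟩
    rw [hends, Sym2.mem_iff] at hu
    rcases hu with rfl | rfl
    · exact absurd huW hsW
    · exact huW
  simp only [degIn_eq_sum_endCount]
  rw [Finset.sum_comm, Finset.sum_congr rfl hcount, Finset.sum_boole, Nat.cast_id]
  congr 1
  ext e
  simp [mem_attachments, not_mem_edgesAvoiding]

lemma attachments_nonempty (hG : G.GConn) (hS : S.Nonempty) (hv : v ∉ S) :
    (G.attachments S (G.compVerts (G.edgesAvoiding S) v)).Nonempty := by
  by_contra hA
  rw [Finset.not_nonempty_iff_eq_empty] at hA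
  have closed : ∀ u, G.reachIn Finset.univ v u → u ∈ G.compVerts (G.edgesAvoiding S) v := by
    intro u h
    induction h with
    | refl => exact self_mem_compVerts
    | @tail b c _ hbc ih =>
      obtain ⟨e, -, hends⟩ := hbc
      by_cases he : e ∈ G.edgesAvoiding S
      · exact mem_compVerts.2 ((mem_compVerts.1 ih).tail ⟨e, he, hends⟩)
      · have : e ∈ G.attachments S (G.compVerts (G.edgesAvoiding S) v) :=
          mem_attachments.2 ⟨not_mem_edgesAvoiding.1 he, b, hends ▸ Sym2.mem_mk_left b c, ih⟩
        simp [hA] at this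
  obtain ⟨s, hs⟩ := hS
  exact not_mem_of_mem_compVerts hv (closed s (hG.2 v s)) hs

lemma card_attachments_eq_two (hG : G.GConn) (hS : S.Nonempty)
    (hdeg : ∀ u ∉ S, G.degIn Finset.univ u = 2) (hv : v ∉ S) :
    (G.attachments S (G.compVerts (G.edgesAvoiding S) v)).card = 2 := by
  have hW : ∀ u ∈ G.compVerts (G.edgesAvoiding S) v, u ∉ S :=
    fun u hu => not_mem_of_mem_compVerts hv hu
  have hsum : 2 * (G.compVerts (G.edgesAvoiding S) v).card =
      2 * (G.compEdges (G.edgesAvoiding S) v).card +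
        (G.attachments S (G.compVerts (G.edgesAvoiding S) v)).card := by
    rw [← sum_degIn_compVerts, ← sum_degIn_compl_edgesAvoiding hW, ← Finset.sum_add_distrib,
      Finset.sum_congr rfl fun u hu => (degIn_add_degIn_compl _ u).trans (hdeg u (hW u hu)),
      Finset.sum_const, smul_eq_mul, mul_comm]
  have := card_compVerts_le (G.edgesAvoiding S) v
  have := (attachments_nonempty hG hS hv).card_pos
  omega

lemma disjoint_compEdges_attachments :
    Disjoint (G.compEdges (G.edgesAvoiding S) v) (G.attachments S W) :=
  disjoint_compl_right.mono compEdges_subset attachments_subset_compl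

lemma degIn_pieceAt_of_mem_compVerts (hu : u ∈ G.compVerts (G.edgesAvoiding S) v) :
    G.degIn (G.pieceAt S v) u = G.degIn Finset.univ u := by
  rw [pieceAt, degIn_union disjoint_compEdges_attachments, degIn_compEdges hu,
    ← degIn_add_degIn_compl (G.edgesAvoiding S) u]
  congr 1
  refine Finset.sum_subset attachments_subset_compl fun g hg hgA =>
    endCount_eq_zero fun hug => hgA ?_
  exact mem_attachments.2 ⟨not_mem_edgesAvoiding.1 (Finset.mem_compl.1 hg), u, hug, hu⟩

lemma degIn_pieceAt_of_mem (hv : v ∉ S) (hr : r ∈ S) :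
    G.degIn (G.pieceAt S v) r =
      G.degIn (G.attachments S (G.compVerts (G.edgesAvoiding S) v)) r := by
  rw [pieceAt, degIn_union disjoint_compEdges_attachments,
    degIn_eq_zero fun h => not_mem_of_mem_compVerts hv (supp_compEdges_subset h) hr, zero_add]

lemma connSet_pieceAt (hne : (G.pieceAt S v).Nonempty) : G.ConnSet (G.pieceAt S v) := by
  have reach : ∀ u ∈ G.supp (G.pieceAt S v), G.reachIn (G.pieceAt S v) v u := by
    intro u hu
    obtain ⟨g, hg, hug⟩ := mem_supp.1 hu
    obtain ⟨w, hwg, hw⟩ : ∃ w ∈ G.ends g, w ∈ G.compVerts (G.edgesAvoiding S) v := by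
      rcases Finset.mem_union.1 hg with hg' | hg'
      · exact ⟨u, hug, mem_compVerts_of_mem_ends hg' hug⟩
      · exact (mem_attachments.1 hg').2
    exact ((reachIn_compEdges (mem_compVerts.1 hw)).mono Finset.subset_union_left).trans
      (reachIn_of_mem_ends hg hwg hug)
  exact ⟨hne, fun a ha b hb => (reach a ha).symm.trans (reach b hb)⟩

lemma exists_ends_eq_of_mem_attachments (hv : v ∉ S)
    (hg : g ∈ G.attachments S (G.compVerts (G.edgesAvoiding S) v)) :
    ∃ s ∈ S, ∃ w ∈ G.compVerts (G.edgesAvoiding S) v, G.ends g = s(s, w) := by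
  obtain ⟨⟨s, hs, hsS⟩, w, hw, hwW⟩ := mem_attachments.1 hg
  have hsw : s ≠ w := fun h => not_mem_of_mem_compVerts hv hwW (h ▸ hsS)
  exact ⟨s, hsS, w, hwW, (Sym2.mem_and_mem_iff hsw).1 ⟨hs, hw⟩⟩

lemma isEarOn_pieceAt (hG : G.GConn) (hS : S.Nonempty)
    (hdeg : ∀ u ∉ S, G.degIn Finset.univ u = 2) (hv : v ∉ S) :
    G.IsEarOn S (G.pieceAt S v) := by
  obtain ⟨f₁, f₂, hf, hA⟩ := Finset.card_eq_two.1 (card_attachments_eq_two hG hS hdeg hv)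
  obtain ⟨s₁, hs₁, w₁, hw₁, h₁⟩ :=
    exists_ends_eq_of_mem_attachments hv (hA ▸ Finset.mem_insert_self f₁ {f₂})
  obtain ⟨s₂, hs₂, w₂, hw₂, h₂⟩ :=
    exists_ends_eq_of_mem_attachments hv
      (hA ▸ Finset.mem_insert_of_mem (Finset.mem_singleton_self f₂))
  have hdegS : ∀ r ∈ S, G.degIn (G.pieceAt S v) r =
      (if r = s₁ then 1 else 0) + (if r = s₂ then 1 else 0) := by
    intro r hr
    have hrw : ∀ w ∈ G.compVerts (G.edgesAvoiding S) v, r ≠ w :=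
      fun w hw h => not_mem_of_mem_compVerts hv hw (h ▸ hr)
    rw [degIn_pieceAt_of_mem hv hr, hA, degIn_eq_sum_endCount, Finset.sum_pair hf,
      endCount_eq h₁, endCount_eq h₂, if_neg (hrw w₁ hw₁), if_neg (hrw w₂ hw₂), add_zero,
      add_zero]
  have hf₁ : f₁ ∈ G.pieceAt S v :=
    Finset.mem_union_right _ (hA ▸ Finset.mem_insert_self f₁ {f₂})
  refine ⟨s₁, hs₁, s₂, hs₂, isEar_of_degIn (connSet_pieceAt ⟨f₁, hf₁⟩)
    (fun r hr => hdegS r (by rcases hr with rfl | rfl <;> assumption))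
    (fun u hu hu₁ hu₂ => ?_), hdegS⟩
  by_cases huS : u ∈ S
  · have := one_le_degIn hu
    simp [hdegS u huS, hu₁, hu₂] at this
  · rw [degIn_pieceAt_of_mem_compVerts (mem_compVerts_of_mem_supp_pieceAt hv hu huS),
      hdeg u huS]

lemma isEarOn_of_mem_pieces (hG : G.GConn) (hS : S.Nonempty)
    (hdeg : ∀ u ∉ S, G.degIn Finset.univ u = 2) (hQ : Q ∈ G.pieces S) : G.IsEarOn S Q := by
  obtain ⟨e, -, rfl⟩ := Finset.mem_image.1 hQ
  by_cases h : ∃ u ∈ G.ends e, u ∉ S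
  · rw [pieceOf, dif_pos h]
    exact isEarOn_pieceAt hG hS hdeg h.choose_spec.2
  · rw [pieceOf, dif_neg h]
    exact isEarOn_singleton (by simpa using h)

end Ears

section Classification

variable {S : Finset G.V} {Q P C₁ C₂ P₁ P₂ P₃ : Finset G.E} {x y : G.V} {k : ℕ}

lemma IsEarOn.degIn_pair (h : G.IsEarOn {x, y} Q) (hxy : x ≠ y) :
    G.degIn Q x + G.degIn Q y = 2 ∧ (G.degIn Q x = 1 → G.IsPathSet Q x y) ∧
      (G.degIn Q x ≠ 1 → G.IsCycleSet Q) := by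
  obtain ⟨s, hs, t, ht, hear, hdeg⟩ := h
  have hdx := hdeg x (by simp)
  have hdy := hdeg y (by simp)
  simp only [Finset.mem_insert, Finset.mem_singleton] at hs ht
  rcases hs with rfl | rfl <;> rcases ht with rfl | rfl
  · simp [hdx, hdy, Ne.symm hxy, hear.isCycleSet]
  · simp [hdx, hdy, hxy, Ne.symm hxy, hear.isPathSet hxy]
  · simp [hdx, hdy, hxy, Ne.symm hxy, (hear.isPathSet (Ne.symm hxy)).symm]
  · simp [hdx, hdy, hxy, hear.isCycleSet]

lemma isButterfly_of_degIn (hG : G.GConn) (hiso : G.NoIso) (hx : G.degIn Finset.univ x = 4)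
    (hdeg : ∀ u ∉ ({x} : Finset G.V), G.degIn Finset.univ u = 2) : G.IsButterfly := by
  have hcyc : ∀ Q ∈ G.pieces {x}, G.IsCycleSet Q ∧ x ∈ G.supp Q ∧ G.degIn Q x = 2 := by
    intro Q hQ
    obtain ⟨s, hs, t, ht, hear, hdegQ⟩ :=
      isEarOn_of_mem_pieces hG (Finset.singleton_nonempty x) hdeg hQ
    rw [Finset.mem_singleton.1 hs, Finset.mem_singleton.1 ht] at hear hdegQ
    have hxQ : x ∈ G.supp Q :=
      degIn_pos_iff.1 (by rw [hdegQ x (Finset.mem_singleton_self x)]; simp)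
    exact ⟨hear.isCycleSet, hxQ, hear.isCycleSet.2 x hxQ⟩
  have hcard : (G.pieces {x}).card = 2 := by
    have := (degIn_univ_eq_sum_pieces (S := {x}) x).symm.trans hx
    rw [Finset.sum_congr rfl fun Q hQ => (hcyc Q hQ).2.2, Finset.sum_const, smul_eq_mul] at this
    omega
  obtain ⟨C₁, C₂, hne, hF⟩ := Finset.card_eq_two.1 hcard
  have h₁ : C₁ ∈ G.pieces {x} := hF ▸ Finset.mem_insert_self _ _
  have h₂ : C₂ ∈ G.pieces {x} := hF ▸ Finset.mem_insert_of_mem (Finset.mem_singleton_self _)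
  obtain ⟨hd, hs⟩ := pieces_pairwise h₁ h₂ hne
  obtain ⟨hc₁, hx₁, -⟩ := hcyc C₁ h₁
  obtain ⟨hc₂, hx₂, -⟩ := hcyc C₂ h₂
  refine ⟨hiso, C₁, C₂, x, hc₁, hc₂, hd, ?_, by grind⟩
  simpa using biUnion_eq_univ_of_pieces_subset hF.subset

lemma isTheta_of_pieces (hiso : G.NoIso) (hF : G.pieces {x, y} ⊆ {P₁, P₂, P₃})
    (hm₁ : P₁ ∈ G.pieces {x, y}) (hm₂ : P₂ ∈ G.pieces {x, y}) (hm₃ : P₃ ∈ G.pieces {x, y})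
    (h₁₂ : P₁ ≠ P₂) (h₁₃ : P₁ ≠ P₃) (h₂₃ : P₂ ≠ P₃)
    (h₁ : G.IsPathSet P₁ x y) (h₂ : G.IsPathSet P₂ x y) (h₃ : G.IsPathSet P₃ x y) :
    G.IsTheta := by
  obtain ⟨d₁₂, s₁₂⟩ := pieces_pairwise hm₁ hm₂ h₁₂
  obtain ⟨d₁₃, s₁₃⟩ := pieces_pairwise hm₁ hm₃ h₁₃
  obtain ⟨d₂₃, s₂₃⟩ := pieces_pairwise hm₂ hm₃ h₂₃
  have := h₁.2.2.1; have := h₁.2.2.2.1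
  have := h₂.2.2.1; have := h₂.2.2.2.1
  have := h₃.2.2.1; have := h₃.2.2.2.1
  refine ⟨hiso, x, y, P₁, P₂, P₃, h₁, h₂, h₃, ?_, d₁₂, d₁₃, d₂₃, by grind, by grind, by grind⟩
  simpa [Finset.union_assoc] using biUnion_eq_univ_of_pieces_subset hF

lemma isDumbbell_of_pieces (hiso : G.NoIso) (hF : G.pieces {x, y} ⊆ {C₁, C₂, P})
    (hm₁ : C₁ ∈ G.pieces {x, y}) (hm₂ : C₂ ∈ G.pieces {x, y}) (hmP : P ∈ G.pieces {x, y})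
    (h₁ : G.IsCycleSet C₁) (hx₁ : x ∈ G.supp C₁) (hy₁ : y ∉ G.supp C₁)
    (h₂ : G.IsCycleSet C₂) (hx₂ : x ∉ G.supp C₂) (hy₂ : y ∈ G.supp C₂)
    (hP : G.IsPathSet P x y) : G.IsDumbbell := by
  have hxP := hP.2.2.1
  have hyP := hP.2.2.2.1
  obtain ⟨d₁₂, s₁₂⟩ := pieces_pairwise hm₁ hm₂ (by grind)
  obtain ⟨d₁P, s₁P⟩ := pieces_pairwise hm₁ hmP (by grind)
  obtain ⟨d₂P, s₂P⟩ := pieces_pairwise hm₂ hmP (by grind)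
  refine ⟨hiso, C₁, C₂, P, x, y, h₁, h₂, hP, d₁₂, d₁P, d₂P, ?_, by grind, by grind, by grind⟩
  simpa [Finset.union_assoc] using biUnion_eq_univ_of_pieces_subset hF

noncomputable def piecesOfDegIn (S : Finset G.V) (x : G.V) (k : ℕ) : Finset (Finset G.E) :=
  (G.pieces S).filter (G.degIn · x = k)

lemma mem_piecesOfDegIn : Q ∈ G.piecesOfDegIn S x k ↔ Q ∈ G.pieces S ∧ G.degIn Q x = k :=
  Finset.mem_filter

lemma degIn_pair_of_mem_pieces (hG : G.GConn) (hxy : x ≠ y)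
    (hdeg : ∀ u ∉ ({x, y} : Finset G.V), G.degIn Finset.univ u = 2) (hQ : Q ∈ G.pieces {x, y}) :
    G.degIn Q x + G.degIn Q y = 2 ∧ (G.degIn Q x = 1 → G.IsPathSet Q x y) ∧
      (G.degIn Q x ≠ 1 → G.IsCycleSet Q) :=
  (isEarOn_of_mem_pieces hG (Finset.insert_nonempty x {y}) hdeg hQ).degIn_pair hxy

lemma mem_piecesOfDegIn_pair (hG : G.GConn) (hxy : x ≠ y)
    (hdeg : ∀ u ∉ ({x, y} : Finset G.V), G.degIn Finset.univ u = 2) (hQ : Q ∈ G.pieces {x, y}) :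
    Q ∈ G.piecesOfDegIn {x, y} x 1 ∨ Q ∈ G.piecesOfDegIn {x, y} x 2 ∨
      Q ∈ G.piecesOfDegIn {x, y} x 0 := by
  simp only [mem_piecesOfDegIn, hQ, true_and]
  have := (degIn_pair_of_mem_pieces hG hxy hdeg hQ).1
  omega

/-- Counting degrees at `x` and at `y` over the pieces: the paths contribute `1 + 1`, the cycles
through `x` contribute `2 + 0` and those through `y` contribute `0 + 2`. -/
lemma card_piecesOfDegIn_pair (hG : G.GConn) (hxy : x ≠ y)
    (hx : G.degIn Finset.univ x = 3) (hy : G.degIn Finset.univ y = 3)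
    (hdeg : ∀ u ∉ ({x, y} : Finset G.V), G.degIn Finset.univ u = 2) :
    (G.piecesOfDegIn {x, y} x 1).card = 3 ∧ (G.piecesOfDegIn {x, y} x 2).card = 0 ∧
        (G.piecesOfDegIn {x, y} x 0).card = 0 ∨
      (G.piecesOfDegIn {x, y} x 1).card = 1 ∧ (G.piecesOfDegIn {x, y} x 2).card = 1 ∧
        (G.piecesOfDegIn {x, y} x 0).card = 1 := by
  have hsum2 : ∀ Q ∈ G.pieces {x, y}, G.degIn Q x + G.degIn Q y = 2 :=
    fun Q hQ => (degIn_pair_of_mem_pieces hG hxy hdeg hQ).1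
  have hcx := Finset.sum_eq_card_filter_add_two_mul (G.pieces {x, y}) (d := (G.degIn · x))
    fun Q hQ => by have := hsum2 Q hQ; omega
  have hcy := Finset.sum_eq_card_filter_add_two_mul (G.pieces {x, y}) (d := (G.degIn · y))
    fun Q hQ => by have := hsum2 Q hQ; omega
  rw [← degIn_univ_eq_sum_pieces, hx] at hcx
  have h₁ : (G.pieces {x, y}).filter (G.degIn · y = 1) = G.piecesOfDegIn {x, y} x 1 :=
    Finset.filter_congr fun Q hQ => by have := hsum2 Q hQ; omega
  have h₂ : (G.pieces {x, y}).filter (G.degIn · y = 2) = G.piecesOfDegIn {x, y} x 0 :=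
    Finset.filter_congr fun Q hQ => by have := hsum2 Q hQ; omega
  rw [← degIn_univ_eq_sum_pieces, hy, h₁, h₂] at hcy
  change 3 = (G.piecesOfDegIn {x, y} x 1).card + 2 * (G.piecesOfDegIn {x, y} x 2).card at hcx
  omega

lemma isTheta_of_card_piecesOfDegIn (hG : G.GConn) (hiso : G.NoIso) (hxy : x ≠ y)
    (hdeg : ∀ u ∉ ({x, y} : Finset G.V), G.degIn Finset.univ u = 2)
    (hA : (G.piecesOfDegIn {x, y} x 1).card = 3) (hB : (G.piecesOfDegIn {x, y} x 2).card = 0)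
    (hC : (G.piecesOfDegIn {x, y} x 0).card = 0) : G.IsTheta := by
  obtain ⟨P₁, P₂, P₃, h₁₂, h₁₃, h₂₃, hA⟩ := Finset.card_eq_three.1 hA
  have hpath : ∀ P ∈ ({P₁, P₂, P₃} : Finset (Finset G.E)),
      P ∈ G.pieces {x, y} ∧ G.IsPathSet P x y := fun P hP => by
    obtain ⟨hPF, hPx⟩ := mem_piecesOfDegIn.1 (hA ▸ hP)
    exact ⟨hPF, (degIn_pair_of_mem_pieces hG hxy hdeg hPF).2.1 hPx⟩
  have hsub : G.pieces {x, y} ⊆ {P₁, P₂, P₃} := fun Q hQ => by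
    rw [Finset.card_eq_zero] at hB hC
    rcases mem_piecesOfDegIn_pair hG hxy hdeg hQ with h | h | h
    · rwa [← hA]
    · simp [hB] at h
    · simp [hC] at h
  exact isTheta_of_pieces hiso hsub (hpath P₁ (by simp)).1 (hpath P₂ (by simp)).1
    (hpath P₃ (by simp)).1 h₁₂ h₁₃ h₂₃ (hpath P₁ (by simp)).2 (hpath P₂ (by simp)).2
    (hpath P₃ (by simp)).2

lemma isDumbbell_of_card_piecesOfDegIn (hG : G.GConn) (hiso : G.NoIso) (hxy : x ≠ y)
    (hdeg : ∀ u ∉ ({x, y} : Finset G.V), G.degIn Finset.univ u = 2)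
    (hA : (G.piecesOfDegIn {x, y} x 1).card = 1) (hB : (G.piecesOfDegIn {x, y} x 2).card = 1)
    (hC : (G.piecesOfDegIn {x, y} x 0).card = 1) : G.IsDumbbell := by
  obtain ⟨P, hA⟩ := Finset.card_eq_one.1 hA
  obtain ⟨C₁, hB⟩ := Finset.card_eq_one.1 hB
  obtain ⟨C₂, hC⟩ := Finset.card_eq_one.1 hC
  obtain ⟨hPF, hPx⟩ := mem_piecesOfDegIn.1 (hA ▸ Finset.mem_singleton_self P)
  obtain ⟨h₁F, h₁x⟩ := mem_piecesOfDegIn.1 (hB ▸ Finset.mem_singleton_self C₁)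
  obtain ⟨h₂F, h₂x⟩ := mem_piecesOfDegIn.1 (hC ▸ Finset.mem_singleton_self C₂)
  have hsub : G.pieces {x, y} ⊆ {C₁, C₂, P} := fun Q hQ => by
    rcases mem_piecesOfDegIn_pair hG hxy hdeg hQ with h | h | h
    · simp [Finset.mem_singleton.1 (hA ▸ h)]
    · simp [Finset.mem_singleton.1 (hB ▸ h)]
    · simp [Finset.mem_singleton.1 (hC ▸ h)]
  obtain ⟨h₁y, -, hc₁⟩ := degIn_pair_of_mem_pieces hG hxy hdeg h₁F
  obtain ⟨h₂y, -, hc₂⟩ := degIn_pair_of_mem_pieces hG hxy hdeg h₂F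
  exact isDumbbell_of_pieces hiso hsub h₁F h₂F hPF (hc₁ (by omega))
    (degIn_pos_iff.1 (by omega)) (fun h => absurd (degIn_pos_iff.2 h) (by omega))
    (hc₂ (by omega)) (fun h => absurd (degIn_pos_iff.2 h) (by omega))
    (degIn_pos_iff.1 (by omega)) ((degIn_pair_of_mem_pieces hG hxy hdeg hPF).2.1 hPx)

lemma IsBicycle.noIso (h : G.IsBicycle) : G.NoIso := by
  have : Nonempty G.E := Fintype.card_pos_iff.1 (by have := h.2.2; unfold deltaG at this; omega)
  exact h.1.noIso

lemma IsBicycle.two_le_degIn (h : G.IsBicycle) (v : G.V) : 2 ≤ G.degIn Finset.univ v := by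
  have := one_le_degIn (mem_supp_of_noIso h.noIso rfl v)
  have := h.2.1 v
  omega

lemma IsBicycle.sum_degIn_sub_two (h : G.IsBicycle) :
    ∑ v, (G.degIn Finset.univ v - 2) = 2 := by
  have hsum := G.handshake Finset.univ
  rw [supp_univ_of_noIso h.noIso] at hsum
  rw [Finset.sum_tsub_distrib _ fun v _ => h.two_le_degIn v, hsum]
  have := h.2.2
  simp only [deltaG] at this
  simp only [Finset.sum_const, Finset.card_univ, smul_eq_mul]
  omega

lemma IsBicycle.isTheta_or_isDumbbell_or_isButterfly (h : G.IsBicycle) :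
    G.IsTheta ∨ G.IsDumbbell ∨ G.IsButterfly := by
  set S := Finset.univ.filter fun v => G.degIn Finset.univ v - 2 ≠ 0
  have hsum : ∑ v ∈ S, (G.degIn Finset.univ v - 2) = 2 := by
    rw [Finset.sum_filter_ne_zero]
    exact h.sum_degIn_sub_two
  have hS : ∀ v ∈ S, 1 ≤ G.degIn Finset.univ v - 2 := fun v hv =>
    Nat.one_le_iff_ne_zero.2 (Finset.mem_filter.1 hv).2
  have hdeg : ∀ u ∉ S, G.degIn Finset.univ u = 2 := fun u hu => by
    have := h.two_le_degIn u
    simp only [S, Finset.mem_filter, Finset.mem_univ, true_and, not_not] at hu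
    omega
  have hcard := Finset.card_nsmul_le_sum S _ 1 hS
  rw [hsum, smul_eq_mul, mul_one] at hcard
  have hne : S.Nonempty := Finset.nonempty_of_sum_ne_zero (hsum.trans_ne two_ne_zero)
  rcases (by have := hne.card_pos; omega : S.card = 1 ∨ S.card = 2) with hS1 | hS2
  · obtain ⟨x, hx⟩ := Finset.card_eq_one.1 hS1
    rw [hx, Finset.sum_singleton] at hsum
    exact Or.inr (Or.inr (isButterfly_of_degIn h.1 h.noIso
      (by have := hS x (hx ▸ Finset.mem_singleton_self x); omega) (hx ▸ hdeg)))
  · obtain ⟨x, y, hxy, hxyS⟩ := Finset.card_eq_two.1 hS2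
    rw [hxyS, Finset.sum_pair hxy] at hsum
    have := hS x (hxyS ▸ Finset.mem_insert_self x {y})
    have := hS y (hxyS ▸ Finset.mem_insert_of_mem (Finset.mem_singleton_self y))
    rcases card_piecesOfDegIn_pair h.1 hxy (by omega) (by omega) (hxyS ▸ hdeg)
      with ⟨hA, hB, hC⟩ | ⟨hA, hB, hC⟩
    · exact Or.inl (isTheta_of_card_piecesOfDegIn h.1 h.noIso hxy (hxyS ▸ hdeg) hA hB hC)
    · exact Or.inr (Or.inl
        (isDumbbell_of_card_piecesOfDegIn h.1 h.noIso hxy (hxyS ▸ hdeg) hA hB hC))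

end Classification

end Multigraph

/-- A graph is a bicycle iff it is a `Θ`-graph, a dumbbell, or a butterfly. -/
theorem stmt_7 (D : Multigraph) :
    D.IsBicycle ↔ (D.IsTheta ∨ D.IsDumbbell ∨ D.IsButterfly) :=
  ⟨Multigraph.IsBicycle.isTheta_or_isDumbbell_or_isButterfly,
    fun h => h.elim Multigraph.IsTheta.isBicycle fun h =>
      h.elim Multigraph.IsDumbbell.isBicycle Multigraph.IsButterfly.isBicycle⟩
end
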